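/- A ring R is Zhou nil-clean if and only if every square element of R is the sum of a tripotent and a nilpotent that commute with each other. -/

import Mathlib

/-- A ring is Zhou nil-clean if every element is the sum of two tripotents
and a nilpotent that pairwise commute. -/
def ZhouNilClean (R : Type*) [Ring R] : Prop :=
  ∀ a : R, ∃ p q w : R, p ^ 3 = p ∧ q ^ 3 = q ∧ IsNilpotent w ∧
    Commute p q ∧ Commute p w ∧ Commute q w ∧ a = p + q + w

/-!
All computations take place in a commutative subring generated by commuting elements, modulo its
nilradical. If `3 = p + q + w`, then `s = p + q` satisfies `s (s² - 1) (s² - 4) = 0`, which forces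
`30` to be nilpotent; and `((p + q)²)³ - (p + q)² = 30 (p q + p² q²)`, so squares are tripotent
modulo nilpotents. Conversely, `x² = p + w` gives `x⁶ ≡ x²`, hence `x⁵ ≡ x`, and then
`a = (2a - a³) + (a³ - a)` with both summands tripotent modulo nilpotents.

In both directions tripotents are lifted modulo the nilradical. Since `30` is nilpotent, the ring
splits into a part where `2` is nilpotent, on which a tripotent modulo nilpotents is an idempotent
modulo nilpotents, and a part where `2` is invertible, on which `t` is the difference of the
idempotents `(t² ± t) / 2`; idempotents lift.
-/

section CommRing

variable {A : Type*} [CommRing A]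

theorem isNilpotent_iff_mk_nilradical_eq_zero {x : A} :
    IsNilpotent x ↔ Ideal.Quotient.mk (nilradical A) x = 0 := by
  rw [Ideal.Quotient.eq_zero_iff_mem, mem_nilradical]

theorem exists_isIdempotentElem_isNilpotent_sub {x : A} (hx : IsNilpotent (x ^ 2 - x)) :
    ∃ e, IsIdempotentElem e ∧ IsNilpotent (x - e) := by
  have hker : ∀ y ∈ RingHom.ker (Ideal.Quotient.mk (nilradical A)), IsNilpotent y := by
    intro y hy
    rwa [Ideal.mk_ker, mem_nilradical] at hy
  rw [isNilpotent_iff_mk_nilradical_eq_zero, map_sub, map_pow, sub_eq_zero, sq] at hx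
  obtain ⟨e, he, hex⟩ := exists_isIdempotentElem_eq_of_ker_isNilpotent _ hker _ ⟨x, rfl⟩ hx
  exact ⟨e, he, by rw [isNilpotent_iff_mk_nilradical_eq_zero, map_sub, hex, sub_self]⟩

theorem exists_tripotent_isNilpotent_sub_sub {a b : A} (ha : IsNilpotent (a ^ 2 - a))
    (hb : IsNilpotent (b ^ 2 - b)) (hab : IsNilpotent (a * b)) :
    ∃ p, p ^ 3 = p ∧ IsNilpotent (a - b - p) := by
  obtain ⟨e, he, hae⟩ := exists_isIdempotentElem_isNilpotent_sub ha
  obtain ⟨f, hf, hbf⟩ := exists_isIdempotentElem_isNilpotent_sub hb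
  have hef : e * f = 0 := by
    refine (he.mul hf).eq_zero_of_isNilpotent ?_
    rw [isNilpotent_iff_mk_nilradical_eq_zero, map_sub, sub_eq_zero] at hae hbf
    rwa [isNilpotent_iff_mk_nilradical_eq_zero, map_mul, ← hae, ← hbf, ← map_mul,
      ← isNilpotent_iff_mk_nilradical_eq_zero]
  refine ⟨e - f, ?_, ?_⟩
  · linear_combination (e + 1) * he.eq - (f + 1) * hf.eq - 3 * (e - f) * hef
  · rw [sub_sub_sub_comm]
    exact (Commute.all _ _).isNilpotent_sub hae hbf

/-- `E` is the component on which `2` is nilpotent, and `h` inverts `2` on the complementary one. -/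
theorem exists_two_mul_eq_one_sub_of_isNilpotent_two_mul {m : ℕ} (hm : Odd m)
    (h2m : IsNilpotent (2 * m : A)) :
    ∃ E h : A, IsNilpotent (2 * E) ∧ 2 * h = 1 - E ∧ h * E = 0 := by
  obtain ⟨n, hn⟩ := h2m
  have hcop : IsCoprime ((2 : A) ^ (n + 1)) ((m : A) ^ (n + 1)) := by
    have := (Nat.isCoprime_iff_coprime.mpr
      ((Nat.coprime_two_left.mpr hm).pow (n + 1) (n + 1))).map (Int.castRingHom A)
    simpa using this
  obtain ⟨u, v, huv⟩ := hcop
  refine ⟨v * m ^ (n + 1), u * 2 ^ n, ?_, by linear_combination huv, ?_⟩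
  · have : 2 * (v * (m : A) ^ (n + 1)) = 2 * m * (v * m ^ n) := by ring
    rw [this]
    exact (Commute.all _ _).isNilpotent_mul_right ⟨n, hn⟩
  · linear_combination u * v * m * hn

theorem exists_tripotent_isNilpotent_sub {m : ℕ} (hm : Odd m) (h2m : IsNilpotent (2 * m : A))
    {t : A} (ht : IsNilpotent (t ^ 3 - t)) : ∃ p, p ^ 3 = p ∧ IsNilpotent (t - p) := by
  obtain ⟨E, h, h2E, hh, hhE⟩ := exists_two_mul_eq_one_sub_of_isNilpotent_two_mul hm h2m
  rw [isNilpotent_iff_mk_nilradical_eq_zero] at h2E ht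
  apply_fun Ideal.Quotient.mk (nilradical A) at hh hhE
  simp only [map_mul, map_sub, map_pow, map_ofNat, map_one, map_zero] at h2E ht hh hhE
  -- `a` is `t²` on `E` and `(t² + t) / 2` off it, `b` is `(t² - t) / 2` off `E`
  set a := E * t ^ 2 + h * (t ^ 2 + t)
  set b := h * (t ^ 2 - t)
  have key : IsNilpotent (a ^ 2 - a) ∧ IsNilpotent (b ^ 2 - b) ∧ IsNilpotent (a * b) ∧
      IsNilpotent ((t - (a - b)) ^ 2) := by
    simp only [isNilpotent_iff_mk_nilradical_eq_zero, a, b, map_mul, map_sub, map_pow, map_add]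
    refine ⟨?_, ?_, ?_, ?_⟩ <;> grind
  obtain ⟨ha, hb, hab, hta⟩ := key
  obtain ⟨p, hp, hap⟩ := exists_tripotent_isNilpotent_sub_sub ha hb hab
  exact ⟨p, hp, by simpa using (Commute.all _ _).isNilpotent_add hta.of_pow hap⟩

theorem isNilpotent_thirty_of_three_eq {p q w : A} (hp : p ^ 3 = p) (hq : q ^ 3 = q)
    (hw : IsNilpotent w) (h3 : 3 = p + q + w) : IsNilpotent (30 : A) := by
  refine IsNilpotent.of_pow (m := 3) ?_
  rw [isNilpotent_iff_mk_nilradical_eq_zero] at hw ⊢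
  apply_fun Ideal.Quotient.mk (nilradical A) at hp hq h3
  simp only [map_pow, map_add, map_ofNat] at hp hq h3 ⊢
  grind

theorem exists_tripotent_isNilpotent_sq_sub (h30 : IsNilpotent (30 : A)) {p q w : A}
    (hp : p ^ 3 = p) (hq : q ^ 3 = q) (hw : IsNilpotent w) :
    ∃ p₀, p₀ ^ 3 = p₀ ∧ IsNilpotent ((p + q + w) ^ 2 - p₀) := by
  refine exists_tripotent_isNilpotent_sub (m := 15) (by decide) (by norm_num [h30]) ?_
  rw [isNilpotent_iff_mk_nilradical_eq_zero] at h30 hw ⊢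
  apply_fun Ideal.Quotient.mk (nilradical A) at hp hq
  simp only [map_pow, map_add, map_sub, map_ofNat] at h30 hp hq ⊢
  grind

theorem exists_tripotent_add_tripotent_isNilpotent_sub (h : ∀ z : A, IsNilpotent (z ^ 5 - z))
    (a : A) : ∃ p q, p ^ 3 = p ∧ q ^ 3 = q ∧ IsNilpotent (a - p - q) := by
  have h30 : IsNilpotent (2 * (15 : ℕ) : A) := by
    convert h 2 using 1
    norm_num
  have ha := h a
  have ha' := h (a + 1)
  have h5 : IsNilpotent (5 * (a ^ 3 - a)) := by
    refine IsNilpotent.of_pow (m := 2) ?_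
    rw [isNilpotent_iff_mk_nilradical_eq_zero] at h30 ha ha' ⊢
    simp only [map_pow, map_add, map_sub, map_mul, map_one, map_ofNat, Nat.cast_ofNat]
      at h30 ha ha' ⊢
    grind
  -- modulo `a⁵ - a`, these are `15 (a³ - a)` and `-5 (a³ - a)`
  have hx : IsNilpotent ((2 * a - a ^ 3) ^ 3 - (2 * a - a ^ 3)) ∧
      IsNilpotent ((a ^ 3 - a) ^ 3 - (a ^ 3 - a)) := by
    simp only [isNilpotent_iff_mk_nilradical_eq_zero, map_pow, map_sub, map_mul, map_ofNat]
      at ha h5 ⊢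
    constructor <;> grind
  obtain ⟨p, hp, hpn⟩ := exists_tripotent_isNilpotent_sub (by decide) h30 hx.1
  obtain ⟨q, hq, hqn⟩ := exists_tripotent_isNilpotent_sub (by decide) h30 hx.2
  refine ⟨p, q, hp, hq, ?_⟩
  convert (Commute.all _ _).isNilpotent_add hpn hqn using 1
  ring

end CommRing

section Ring

universe u

variable {R : Type u} [Ring R]

open scoped IsMulCommutative in
theorem exists_injective_ringHom_of_pairwise_commute {s : Set R} (hs : s.Pairwise Commute) :
    ∃ (A : Type u) (_ : CommRing A) (f : A →+* R),
      Function.Injective f ∧ s ⊆ Set.range f := by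
  have := Subring.isMulCommutative_closure fun x hx y hy => (hs.of_refl hx hy).eq
  exact ⟨Subring.closure s, inferInstance, (Subring.closure s).subtype, Subtype.val_injective,
    fun x hx => ⟨⟨x, Subring.subset_closure hx⟩, rfl⟩⟩

theorem ZhouNilClean.isNilpotent_thirty (hR : ZhouNilClean R) : IsNilpotent (30 : R) := by
  obtain ⟨p, q, w, hp, hq, hw, hpq, hpw, hqw, h3⟩ := hR 3
  obtain ⟨A, _, f, hf, hs⟩ := exists_injective_ringHom_of_pairwise_commute (s := {p, q, w})
    (by simp [Set.pairwise_insert, hpq, hpw, hqw, hpq.symm, hpw.symm, hqw.symm])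
  obtain ⟨P, rfl⟩ := hs (by simp : p ∈ _)
  obtain ⟨Q, rfl⟩ := hs (by simp : q ∈ _)
  obtain ⟨W, rfl⟩ := hs (by simp : w ∈ _)
  rw [← map_ofNat f, IsNilpotent.map_iff hf]
  exact isNilpotent_thirty_of_three_eq (p := P) (q := Q) (hf (by simpa)) (hf (by simpa))
    ((IsNilpotent.map_iff hf).mp hw) (hf (by simpa [map_ofNat] using h3))

theorem ZhouNilClean.exists_sq_eq_add (hR : ZhouNilClean R) (x : R) :
    ∃ p w : R, p ^ 3 = p ∧ IsNilpotent w ∧ Commute p w ∧ x ^ 2 = p + w := by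
  obtain ⟨p, q, w, hp, hq, hw, hpq, hpw, hqw, rfl⟩ := hR x
  obtain ⟨A, _, f, hf, hs⟩ := exists_injective_ringHom_of_pairwise_commute (s := {p, q, w})
    (by simp [Set.pairwise_insert, hpq, hpw, hqw, hpq.symm, hpw.symm, hqw.symm])
  obtain ⟨P, rfl⟩ := hs (by simp : p ∈ _)
  obtain ⟨Q, rfl⟩ := hs (by simp : q ∈ _)
  obtain ⟨W, rfl⟩ := hs (by simp : w ∈ _)
  have h30 : IsNilpotent (30 : A) := by
    rw [← IsNilpotent.map_iff hf, map_ofNat]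
    exact hR.isNilpotent_thirty
  obtain ⟨p₀, hp₀, hn⟩ := exists_tripotent_isNilpotent_sq_sub h30 (p := P) (q := Q)
    (hf (by simpa)) (hf (by simpa)) ((IsNilpotent.map_iff hf).mp hw)
  exact ⟨f p₀, f ((P + Q + W) ^ 2 - p₀), by rw [← map_pow, hp₀], hn.map f,
    (Commute.all _ _).map f, by simp⟩

theorem isNilpotent_pow_six_sub_sq {x p w : R} (hp : p ^ 3 = p) (hw : IsNilpotent w)
    (hpw : Commute p w) (hx : x ^ 2 = p + w) : IsNilpotent (x ^ 6 - x ^ 2) := by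
  obtain ⟨A, _, f, hf, hs⟩ := exists_injective_ringHom_of_pairwise_commute (s := {p, w})
    (by simp [Set.pairwise_insert, hpw, hpw.symm])
  obtain ⟨P, rfl⟩ := hs (by simp : p ∈ _)
  obtain ⟨W, rfl⟩ := hs (by simp : w ∈ _)
  have hP : P ^ 3 = P := hf (by simpa)
  rw [show x ^ 6 = (x ^ 2) ^ 3 by rw [← pow_mul], hx, ← map_add, ← map_pow, ← map_sub,
    IsNilpotent.map_iff hf]
  rw [IsNilpotent.map_iff hf, isNilpotent_iff_mk_nilradical_eq_zero] at hw
  rw [isNilpotent_iff_mk_nilradical_eq_zero]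
  apply_fun Ideal.Quotient.mk (nilradical A) at hP
  simp only [map_pow, map_add, map_sub] at hP ⊢
  grind

theorem isNilpotent_pow_five_sub_self {x : R} (h : IsNilpotent (x ^ 6 - x ^ 2)) :
    IsNilpotent (x ^ 5 - x) := by
  refine IsNilpotent.of_pow (m := 2) ?_
  have : (x ^ 5 - x) ^ 2 = (x ^ 4 - 1) * (x ^ 6 - x ^ 2) := by noncomm_ring
  rw [this]
  have hc : Commute (x ^ 4 - 1) (x ^ 6 - x ^ 2) :=
    (((Commute.refl x).pow_pow 4 6).sub_right ((Commute.refl x).pow_pow 4 2)).sub_left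
      (Commute.one_left _)
  exact hc.isNilpotent_mul_left h

theorem zhouNilClean_of_forall_isNilpotent_pow_five_sub (h : ∀ x : R, IsNilpotent (x ^ 5 - x)) :
    ZhouNilClean R := by
  intro a
  obtain ⟨A, _, f, hf, hs⟩ := exists_injective_ringHom_of_pairwise_commute (s := {a})
    (Set.pairwise_singleton _ _)
  obtain ⟨a, rfl⟩ := hs rfl
  obtain ⟨p, q, hp, hq, hn⟩ := exists_tripotent_add_tripotent_isNilpotent_sub
    (fun z => (IsNilpotent.map_iff hf).mp (by simpa using h (f z))) a
  exact ⟨f p, f q, f (a - p - q), by rw [← map_pow, hp], by rw [← map_pow, hq], hn.map f,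
    (Commute.all _ _).map f, (Commute.all _ _).map f, (Commute.all _ _).map f, by simp⟩

end Ring

theorem stmt_14 (R : Type*) [Ring R] :
    ZhouNilClean R ↔
      ∀ x : R, ∃ p w : R, p ^ 3 = p ∧ IsNilpotent w ∧ Commute p w ∧ x ^ 2 = p + w := by
  refine ⟨ZhouNilClean.exists_sq_eq_add, fun h => zhouNilClean_of_forall_isNilpotent_pow_five_sub
    fun x => ?_⟩
  obtain ⟨p, w, hp, hw, hpw, hx⟩ := h x
  exact isNilpotent_pow_five_sub_self (isNilpotent_pow_six_sub_sq hp hw hpw hx)
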